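/- For every countable ordinal α ≥ 2, the ideal conv_{α+1} on ω^{α+1}+1 is isomorphic to the ideal (Fin ⊗ Fin(ω^α+1)) ∩ ({∅} ⊗ conv_α) on ω × (ω^α+1). -/

import Mathlib

open Set Filter Topology Ordinal

noncomputable section

/-- The derived set of `A`: the set of accumulation (limit) points of `A`. -/
def derivSet {X : Type*} [TopologicalSpace X] (A : Set X) : Set X :=
  {p | p ∈ closure (A \ {p})}

/-- The ordinal space `ω^a + 1 = [0, ω^a]` with the (order) topology. -/
abbrev OrdSpace (a : Ordinal) : Type _ := ↥(Set.Iic (omega0 ^ a))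

/-- The ideal `conv_a` on `ω^a + 1`: sets with finite derived set. -/
def convIdeal (a : Ordinal) : Set (Set (OrdSpace a)) :=
  {A | (derivSet A).Finite}

/-- `I` is an ideal of subsets. -/
structure IsIdeal {S : Type*} (I : Set (Set S)) : Prop where
  empty_mem : ∅ ∈ I
  subset_mem : ∀ {A B : Set S}, A ⊆ B → B ∈ I → A ∈ I
  union_mem : ∀ {A B : Set S}, A ∈ I → B ∈ I → A ∪ B ∈ I

/-- The subsequence of `f` indexed by `A` converges to `x`. -/
def ConvAlong {X : Type*} [TopologicalSpace X] (f : ℕ → X) (A : Set ℕ) (x : X) : Prop :=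
  ∀ U ∈ nhds x, {n ∈ A | f n ∉ U}.Finite

/-- Katětov order: `J ≤_K I`, where `I` lives on `X` and `J` on `Y`. -/
def KatetovLE {X Y : Type*} (J : Set (Set Y)) (I : Set (Set X)) : Prop :=
  ∃ f : X → Y, ∀ A ∈ J, f ⁻¹' A ∈ I

/-- `X ∈ FinBW(I)`: every sequence in `X` has a convergent subsequence indexed
by an `I`-positive set. -/
def InFinBW (I : Set (Set ℕ)) (X : Type*) [TopologicalSpace X] : Prop :=
  ∀ f : ℕ → X, ∃ A : Set ℕ, A ∉ I ∧ ∃ x : X, ConvAlong f A x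

/-! With `c = ω ^ α`, both ideals are "finitely many accumulation points" ideals. On `ℕ × Iic c`
(`ℕ` discrete) the accumulation points of `A` are those of its fibres, and a fibre of the compact
space `Iic c` has one iff it is infinite; so the Fubini intersection ideal is exactly the set of
`A` with finite derived set. On the other side, `y ↦ c * n + 1 + y` maps the `n`-th column
homeomorphically onto the clopen block `(c * n, c * n + c]` of `Iic (c * ω)`, and these blocks tile
`Ioo 0 (c * ω)`. Reassigning the column tops (a closed discrete set) Hilbert-hotel style onto
`c * ω, 0, c, c * 2, …` gives a bijection that still carries punctured neighbourhoods to punctured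
neighbourhoods of the block images, so derived sets correspond up to the two points `0, c * ω`. -/

open Function

section DerivedSet

variable {X Y : Type*} [TopologicalSpace X] [TopologicalSpace Y]

theorem derivSet_eq_derivedSet (A : Set X) : derivSet A = derivedSet A := by
  ext p
  rw [mem_derivedSet, accPt_principal_iff_clusterPt, ← mem_closure_iff_clusterPt]
  rfl

theorem accPt_principal_iff_of_map_nhdsNE {f : X → Y} {x : X} {y : Y}
    (hf : map f (𝓝[≠] x) = 𝓝[≠] y) (B : Set Y) :
    AccPt y (𝓟 B) ↔ AccPt x (𝓟 (f ⁻¹' B)) := by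
  rw [AccPt, AccPt, ← hf, ← map_inf_principal_preimage, map_neBot_iff]

theorem Topology.IsOpenEmbedding.map_nhdsNE {f : X → Y} (hf : IsOpenEmbedding f) (x : X) :
    map f (𝓝[≠] x) = 𝓝[≠] (f x) := by
  have h := hf.map_nhdsWithin_preimage_eq {f x}ᶜ x
  rwa [preimage_compl, ← image_singleton, hf.injective.preimage_image, image_singleton] at h

theorem derivedSet_image_finite_iff {h φ : X → Y} (hh : Injective h) (hφ : Injective φ)
    (hmap : ∀ x, map h (𝓝[≠] x) = 𝓝[≠] (φ x)) (hrange : (range φ)ᶜ.Finite) (A : Set X) :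
    (derivedSet (h '' A)).Finite ↔ (derivedSet A).Finite := by
  have key : ∀ x, φ x ∈ derivedSet (h '' A) ↔ x ∈ derivedSet A := fun x => by
    rw [mem_derivedSet, mem_derivedSet, accPt_principal_iff_of_map_nhdsNE (hmap x),
      hh.preimage_image]
  refine ⟨fun hfin => (hfin.preimage hφ.injOn).subset fun x hx => (key x).2 hx,
    fun hfin => ((hfin.image φ).union hrange).subset fun y hy => ?_⟩
  by_cases hy' : y ∈ range φ
  · obtain ⟨x, rfl⟩ := hy'
    exact Or.inl ⟨x, (key x).1 hy, rfl⟩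
  · exact Or.inr hy'

theorem derivedSet_nonempty_iff_infinite [CompactSpace X] [T1Space X] {s : Set X} :
    (derivedSet s).Nonempty ↔ s.Infinite :=
  ⟨fun ⟨_, hx⟩ => Set.Infinite.of_accPt hx, Set.Infinite.exists_accPt_principal⟩

end DerivedSet

theorem Set.finite_iff_finite_image_fst_and_fibers {α β : Type*} {S : Set (α × β)} :
    S.Finite ↔ (Prod.fst '' S).Finite ∧ ∀ a, (Prod.mk a ⁻¹' S).Finite := by
  refine ⟨fun hS => ⟨hS.image _, fun a => hS.preimage (Prod.mk_right_injective a).injOn⟩,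
    fun ⟨himage, hfibers⟩ => Finite.of_finite_fibers Prod.fst himage fun a _ =>
      ((hfibers a).image (Prod.mk a)).subset ?_⟩
  rintro ⟨a', b⟩ ⟨hS, rfl⟩
  exact ⟨b, hS, rfl⟩

section FubiniProduct

variable {ι K : Type*} [TopologicalSpace ι] [DiscreteTopology ι] [TopologicalSpace K]

theorem isOpenEmbedding_prodMk_of_discrete (i : ι) : IsOpenEmbedding (Prod.mk i : K → ι × K) :=
  .of_isEmbedding_isOpenMap (isEmbedding_prodMkRight i) fun U hU => by
    rw [← singleton_prod]
    exact (isOpen_discrete _).prod hU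

theorem mem_derivedSet_prod_iff {A : Set (ι × K)} {i : ι} {y : K} :
    (i, y) ∈ derivedSet A ↔ y ∈ derivedSet (Prod.mk i ⁻¹' A) :=
  (accPt_principal_iff_of_map_nhdsNE ((isOpenEmbedding_prodMk_of_discrete i).map_nhdsNE y) A)

theorem derivedSet_prod_finite_iff [CompactSpace K] [T1Space K] (A : Set (ι × K)) :
    (derivedSet A).Finite ↔
      {i | (Prod.mk i ⁻¹' A).Infinite}.Finite ∧ ∀ i, (derivedSet (Prod.mk i ⁻¹' A)).Finite := by
  have hfiber : ∀ i, Prod.mk i ⁻¹' derivedSet A = derivedSet (Prod.mk i ⁻¹' A) :=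
    fun i => ext fun y => mem_derivedSet_prod_iff
  have hfst : Prod.fst '' derivedSet A = {i | (Prod.mk i ⁻¹' A).Infinite} := by
    ext i
    rw [mem_ofPred_eq, ← derivedSet_nonempty_iff_infinite, ← hfiber]
    exact ⟨fun ⟨⟨_, y⟩, hy, hi⟩ => hi ▸ ⟨y, hy⟩, fun ⟨y, hy⟩ => ⟨(i, y), hy, rfl⟩⟩
  rw [finite_iff_finite_image_fst_and_fibers, hfst]
  simp only [hfiber]

end FubiniProduct

namespace Ordinal

variable {c : Ordinal}

instance compactSpace_Iic (c : Ordinal) : CompactSpace (Iic c) :=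
  isCompact_iff_compactSpace.mp (by simpa only [Icc_bot] using isCompact_Icc (a := ⊥) (b := c))

theorem mul_nat_add_le_mul_omega0 (c : Ordinal) (n : ℕ) : c * n + c ≤ c * ω := by
  rw [← mul_add_one]
  exact mul_le_mul_right (by exact_mod_cast (natCast_lt_omega0 (n + 1)).le) c

theorem mul_nat_add_le_mul_nat_of_lt {n m : ℕ} (h : n < m) : c * n + c ≤ c * m := by
  rw [← mul_add_one]
  exact mul_le_mul_right (by exact_mod_cast h) c

theorem eq_of_mem_Ioc_mul_nat {n m : ℕ} {q : Ordinal} (hn : q ∈ Ioc (c * n) (c * n + c))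
    (hm : q ∈ Ioc (c * m) (c * m + c)) : n = m := by
  by_contra hne
  rcases lt_or_gt_of_ne hne with h | h
  · exact (hn.2.trans (mul_nat_add_le_mul_nat_of_lt h)).not_gt hm.1
  · exact (hm.2.trans (mul_nat_add_le_mul_nat_of_lt h)).not_gt hn.1

theorem exists_mem_Ioc_mul_nat (hc : c ≠ 0) {q : Ordinal} (h0 : q ≠ 0) (hq : q < c * ω) :
    ∃ n : ℕ, q ∈ Ioc (c * n) (c * n + c) := by
  obtain ⟨k, hk⟩ := lt_omega0.1 ((lt_mul_iff_div_lt hc).1 hq)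
  rcases (mul_div_le q c).lt_or_eq with hlt | heq
  · exact ⟨k, hk ▸ hlt, hk ▸ (lt_mul_div_add q hc).le⟩
  · rw [hk] at heq
    cases k with
    | zero => exact absurd (by simpa using heq.symm) h0
    | succ n =>
      rw [← heq, Nat.cast_succ, mul_add_one]
      exact ⟨n, lt_add_of_pos_right _ (pos_iff_ne_zero.2 hc), le_rfl⟩

theorem add_one_add_of_omega0_le (d : Ordinal) (hc : ω ≤ c) : d + 1 + c = d + c := by
  rw [add_assoc, one_add_of_omega0_le hc]

theorem mul_nat_add_one_add_mem_Ioc (hc : ω ≤ c) (n : ℕ) {y : Ordinal} (hy : y ≤ c) :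
    c * n + 1 + y ∈ Ioc (c * n) (c * n + c) := by
  rw [← add_one_add_of_omega0_le _ hc]
  exact ⟨(lt_add_one _).trans_le le_self_add, by gcongr⟩

def columnEmb (hc : ω ≤ c) (n : ℕ) (y : Iic c) : Iic (c * ω) :=
  ⟨c * n + 1 + y, (mul_nat_add_one_add_mem_Ioc hc n y.2).2.trans (mul_nat_add_le_mul_omega0 c n)⟩

theorem range_columnEmb (hc : ω ≤ c) (n : ℕ) :
    range (columnEmb hc n) = Subtype.val ⁻¹' Ioc (c * n) (c * n + c) := by
  ext ⟨q, hq⟩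
  refine ⟨fun ⟨y, hy⟩ => hy ▸ mul_nat_add_one_add_mem_Ioc hc n y.2, fun ⟨h1, h2⟩ => ?_⟩
  have hle : c * n + 1 ≤ q := Order.add_one_le_of_lt h1
  refine ⟨⟨q - (c * n + 1), ?_⟩, Subtype.ext (Ordinal.add_sub_cancel_of_le hle)⟩
  rwa [mem_Iic, ← add_le_add_iff_left (c * n + 1), Ordinal.add_sub_cancel_of_le hle,
    add_one_add_of_omega0_le _ hc]

theorem columnEmb_strictMono (hc : ω ≤ c) (n : ℕ) : StrictMono (columnEmb hc n) :=
  fun y z h => show c * n + 1 + y.1 < c * n + 1 + z.1 by gcongr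

theorem isOpenEmbedding_columnEmb (hc : ω ≤ c) (n : ℕ) : IsOpenEmbedding (columnEmb hc n) := by
  refine ⟨(columnEmb_strictMono hc n).isEmbedding_of_ordConnected ?_, ?_⟩ <;>
    rw [range_columnEmb]
  · exact ordConnected_Ioc.preimage_mono (Subtype.mono_coe _)
  · rw [← Order.Ioo_succ_right]
    exact isOpen_Ioo.preimage continuous_subtype_val

theorem injective_uncurry_columnEmb (hc : ω ≤ c) : Injective (uncurry (columnEmb hc)) := by
  rintro ⟨n, y⟩ ⟨m, z⟩ h
  have hval : c * n + 1 + y.1 = c * m + 1 + z.1 := congrArg Subtype.val h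
  obtain rfl : n = m := eq_of_mem_Ioc_mul_nat (mul_nat_add_one_add_mem_Ioc hc n y.2)
    (hval ▸ mul_nat_add_one_add_mem_Ioc hc m z.2)
  exact Prod.ext rfl ((columnEmb_strictMono hc n).injective h)

theorem compl_range_uncurry_columnEmb_subset (hc : ω ≤ c) :
    (range (uncurry (columnEmb hc)))ᶜ ⊆ {⊥, ⊤} := by
  intro q hq
  by_contra hbt
  simp only [mem_insert_iff, mem_singleton_iff, not_or] at hbt
  obtain ⟨n, hn⟩ := exists_mem_Ioc_mul_nat (omega0_pos.trans_le hc).ne'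
    (fun h => hbt.1 (Subtype.ext h)) (lt_top_iff_ne_top.2 hbt.2)
  obtain ⟨y, hy⟩ : q ∈ range (columnEmb hc n) := by rw [range_columnEmb]; exact hn
  exact hq ⟨(n, y), hy⟩

theorem columnEmb_mem_Ioo (hc : ω ≤ c) (n : ℕ) {y : Iic c} (hy : y ≠ ⊤) :
    (columnEmb hc n y : Ordinal) ∈ Ioo (c * n) (c * n + c) := by
  refine ⟨(mul_nat_add_one_add_mem_Ioc hc n y.2).1, ?_⟩
  rw [← add_one_add_of_omega0_le _ hc]
  have hyc : (y : Ordinal) < c := lt_of_le_of_ne y.2 fun h => hy (Subtype.ext h)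
  show c * n + 1 + (y : Ordinal) < c * n + 1 + c
  gcongr

def columnTop (c : Ordinal) : ℕ → Ordinal
  | 0 => c * ω
  | n + 1 => c * n

theorem columnTop_le_mul_omega0 (c : Ordinal) (n : ℕ) : columnTop c n ≤ c * ω := by
  cases n with
  | zero => exact le_rfl
  | succ n => exact le_self_add.trans (mul_nat_add_le_mul_omega0 c n)

theorem columnTop_injective (hc : c ≠ 0) : Injective (columnTop c) := by
  have hlt : ∀ n : ℕ, c * n < c * ω := fun n =>
    (lt_add_of_pos_right _ (pos_iff_ne_zero.2 hc)).trans_le (mul_nat_add_le_mul_omega0 c n)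
  rintro (_ | n) (_ | m) h
  · rfl
  · exact absurd h (hlt m).ne'
  · exact absurd h (hlt n).ne
  · rw [Nat.cast_inj.1 (mul_left_cancel₀ hc h)]

theorem columnTop_notMem_Ioo (c : Ordinal) (n m : ℕ) :
    columnTop c n ∉ Ioo (c * m) (c * m + c) := by
  rintro ⟨h1, h2⟩
  cases n with
  | zero => exact h2.not_ge (mul_nat_add_le_mul_omega0 c m)
  | succ n =>
    have hmn : m < n := by exact_mod_cast lt_of_mul_lt_mul_left' h1
    exact h2.not_ge (mul_nat_add_le_mul_nat_of_lt hmn)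

def prodIicMap (hc : ω ≤ c) (p : ℕ × Iic c) : Iic (c * ω) :=
  if p.2 = ⊤ then ⟨columnTop c p.1, columnTop_le_mul_omega0 c p.1⟩ else columnEmb hc p.1 p.2

theorem prodIicMap_injective (hc : ω ≤ c) : Injective (prodIicMap hc) := by
  rintro ⟨n, y⟩ ⟨m, z⟩ h
  have hval := congrArg Subtype.val h
  by_cases hy : y = ⊤ <;> by_cases hz : z = ⊤ <;>
    simp only [prodIicMap, hy, hz, if_true, if_false] at hval h
  · rw [columnTop_injective (omega0_pos.trans_le hc).ne' hval, hy, hz]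
  · exact absurd (hval ▸ columnEmb_mem_Ioo hc m hz) (columnTop_notMem_Ioo c n m)
  · exact absurd (hval ▸ columnEmb_mem_Ioo hc n hy) (columnTop_notMem_Ioo c m n)
  · exact injective_uncurry_columnEmb hc h

theorem prodIicMap_surjective (hc : ω ≤ c) : Surjective (prodIicMap hc) := by
  intro q
  by_cases hq : q ∈ range (uncurry (columnEmb hc))
  · obtain ⟨⟨n, y⟩, rfl⟩ := hq
    by_cases hy : y = ⊤
    · refine ⟨(n + 2, ⊤), Subtype.ext ?_⟩
      simp only [prodIicMap, hy, if_true]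
      show c * ((n + 1 : ℕ) : Ordinal) = c * n + 1 + c
      rw [add_one_add_of_omega0_le _ hc, Nat.cast_succ, mul_add_one]
    · exact ⟨(n, y), if_neg hy⟩
  · rcases compl_range_uncurry_columnEmb_subset hc hq with rfl | rfl
    · exact ⟨(1, ⊤), Subtype.ext (by simp [prodIicMap, columnTop])⟩
    · exact ⟨(0, ⊤), Subtype.ext (by simp [prodIicMap, columnTop])⟩

theorem map_prodIicMap_nhdsNE (hc : ω ≤ c) (p : ℕ × Iic c) :
    map (prodIicMap hc) (𝓝[≠] p) = 𝓝[≠] (columnEmb hc p.1 p.2) := by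
  obtain ⟨n, y⟩ := p
  rw [← (isOpenEmbedding_prodMk_of_discrete n).map_nhdsNE y, map_map,
    ← (isOpenEmbedding_columnEmb hc n).map_nhdsNE y]
  exact map_congr (mem_of_superset
    (nhdsNE_le_cofinite y (finite_singleton ⊤).compl_mem_cofinite) fun z hz => if_neg hz)

-- `C` is a parameter because `Iic C` sees `c * ω = C` only up to propositional equality.
theorem exists_equiv_prod_Iic_derivedSet_finite_iff (hc : ω ≤ c) {C : Ordinal} (hC : c * ω = C) :
    ∃ f : ℕ × Iic c ≃ Iic C, ∀ A, (derivedSet (f '' A)).Finite ↔ (derivedSet A).Finite := by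
  subst hC
  refine ⟨.ofBijective (prodIicMap hc) ⟨prodIicMap_injective hc, prodIicMap_surjective hc⟩,
    derivedSet_image_finite_iff (prodIicMap_injective hc) (injective_uncurry_columnEmb hc)
      (map_prodIicMap_nhdsNE hc) ((toFinite _).subset (compl_range_uncurry_columnEmb_subset hc))⟩

end Ordinal

theorem stmt5_general (a : Ordinal) (ha : 2 ≤ a) :
    ∃ f : (ℕ × OrdSpace a) ≃ OrdSpace (a + 1),
      ∀ A : Set (ℕ × OrdSpace a),
        (({n : ℕ | {y : OrdSpace a | (n, y) ∈ A}.Infinite}.Finite ∧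
            ∀ n : ℕ, {y : OrdSpace a | (n, y) ∈ A} ∈ convIdeal a)
          ↔ (f '' A) ∈ convIdeal (a + 1)) := by
  have hc : ω ≤ ω ^ a := by
    simpa using opow_le_opow_right omega0_pos (one_le_two.trans ha)
  obtain ⟨f, hf⟩ := exists_equiv_prod_Iic_derivedSet_finite_iff hc (opow_add_one ω a).symm
  refine ⟨f, fun A => ?_⟩
  simp only [convIdeal, mem_ofPred_eq, derivSet_eq_derivedSet]
  rw [hf]
  exact (derivedSet_prod_finite_iff A).symm

/-- `conv_{a+1}` is isomorphic to `(Fin ⊗ Fin(ω^a+1)) ∩ ({∅} ⊗ conv_a)` on `ω × (ω^a+1)`. -/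
theorem stmt5 (a : Ordinal) (ha : 2 ≤ a) (hac : a.card ≤ Cardinal.aleph0) :
    ∃ f : (ℕ × OrdSpace a) ≃ OrdSpace (a + 1),
      ∀ A : Set (ℕ × OrdSpace a),
        (({n : ℕ | {y : OrdSpace a | (n, y) ∈ A}.Infinite}.Finite ∧
            ∀ n : ℕ, {y : OrdSpace a | (n, y) ∈ A} ∈ convIdeal a)
          ↔ (f '' A) ∈ convIdeal (a + 1)) :=
  stmt5_general a ha
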